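/- Let x be an odd element of a Lie superalgebra g acting on a g-module M, with [x,x] = 0 (so x_M² = 0 as an operator, up to a factor, i.e., x_M ∘ x_M = 0). Then Im(x_M) ⊆ Ker(x_M), and DS_x(M) := Ker(x_M)/Im(x_M) is well-defined. Moreover, for a short exact sequence 0 → N → M → K → 0 of modules with x-action, there is an exact sequence 0 → E → DS_x N → DS_x M → DS_x K → E′ → 0 of vector spaces where dim E = dim E′ (in the ℤ/2-graded sense, E′ ≅ E with parity reversed). -/

import Mathlib

/-- `DS_x(M) = Ker x / Im x` for a linear endomorphism `x`. -/
abbrev DS {M : Type*} [AddCommGroup M] [Module ℂ M] (x : M →ₗ[ℂ] M) :=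
  ↥(LinearMap.ker x) ⧸ (LinearMap.range x).comap (LinearMap.ker x).subtype

/-- The map `DS_x N → DS_x M` induced by a morphism `f : N → M` commuting with
the odd operators. -/
noncomputable def DSmap {N M : Type*} [AddCommGroup N] [Module ℂ N]
    [AddCommGroup M] [Module ℂ M] (xN : N →ₗ[ℂ] N) (xM : M →ₗ[ℂ] M)
    (f : N →ₗ[ℂ] M) (hf : xM ∘ₗ f = f ∘ₗ xN) : DS xN →ₗ[ℂ] DS xM :=
  Submodule.mapQ _ _
    (f.restrict (p := LinearMap.ker xN) (q := LinearMap.ker xM)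
      (fun n hn => by
        rw [LinearMap.mem_ker] at hn ⊢
        have h : (xM ∘ₗ f) n = (f ∘ₗ xN) n := by rw [hf]
        simp only [LinearMap.coe_comp, Function.comp_apply] at h
        rw [h, hn, map_zero]))
    (by
      rintro ⟨nn, hnn⟩ h
      simp only [Submodule.mem_comap, Submodule.coe_subtype] at h ⊢
      obtain ⟨y, hy⟩ := h
      refine ⟨f y, ?_⟩
      have h2 : (xM ∘ₗ f) y = (f ∘ₗ xN) y := by rw [hf]
      simp only [LinearMap.coe_comp, Function.comp_apply] at h2
      simp only [LinearMap.restrict_coe_apply]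
      rw [h2, hy])

/-! Hinich's lemma is the snake lemma. Because `x² = 0`, `x` descends to a map
`M ⧸ Im x → Ker x`, whose kernel is `DS_x M` (as a subspace of `M ⧸ Im x`) and whose cokernel
is `DS_x M` again (as a quotient of `Ker x`). The short exact sequence gives a morphism from the
right exact row `N ⧸ Im → M ⧸ Im → K ⧸ Im → 0` to the left exact row `0 → Ker → Ker → Ker`, and
the snake lemma turns it into the exact sequence
`DS N → DS M → DS K →δ DS N → DS M → DS K`. Hence `E = ker (DS N → DS M) = im δ` is isomorphic
to `DS K ⧸ ker δ = DS K ⧸ im (DS M → DS K) = E′`. -/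

open LinearMap Function

-- Exactness of the kernel row of the snake diagram, in the notation of `SnakeLemma.δ`.
theorem SnakeLemma.exact_kernels
    {R : Type*} [Semiring R] {K₁ K₂ K₃ M₁ M₂ M₃ N₁ N₂ : Type*}
    [AddCommMonoid K₁] [Module R K₁] [AddCommMonoid K₂] [Module R K₂]
    [AddCommMonoid K₃] [Module R K₃] [AddCommMonoid M₁] [Module R M₁]
    [AddCommMonoid M₂] [Module R M₂] [AddCommMonoid M₃] [Module R M₃]
    [AddCommMonoid N₁] [Module R N₁] [AddCommMonoid N₂] [Module R N₂]
    {f₁ : M₁ →ₗ[R] M₂} {f₂ : M₂ →ₗ[R] M₃} (hf : Exact f₁ f₂)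
    {g₁ : N₁ →ₗ[R] N₂} (hg₁ : Injective g₁)
    {i₁ : M₁ →ₗ[R] N₁} {i₂ : M₂ →ₗ[R] N₂} (h₁ : g₁ ∘ₗ i₁ = i₂ ∘ₗ f₁)
    {ι₁ : K₁ →ₗ[R] M₁} {ι₂ : K₂ →ₗ[R] M₂} {ι₃ : K₃ →ₗ[R] M₃}
    (hι₁ : Exact ι₁ i₁) (hι₂ : Exact ι₂ i₂) (hι₂_inj : Injective ι₂) (hι₃_inj : Injective ι₃)
    {F₁ : K₁ →ₗ[R] K₂} {F₂ : K₂ →ₗ[R] K₃}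
    (hF₁ : f₁ ∘ₗ ι₁ = ι₂ ∘ₗ F₁) (hF₂ : f₂ ∘ₗ ι₂ = ι₃ ∘ₗ F₂) :
    Exact F₁ F₂ := by
  have hF₁' (w : K₁) : f₁ (ι₁ w) = ι₂ (F₁ w) := congr($hF₁ w)
  have hF₂' (z : K₂) : f₂ (ι₂ z) = ι₃ (F₂ z) := congr($hF₂ z)
  refine exact_of_comp_of_mem_range ?_ fun z hz => ?_
  · ext w
    apply hι₃_inj
    rw [LinearMap.comp_apply, ← hF₂', ← hF₁', hf.apply_apply_eq_zero, LinearMap.zero_apply,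
      map_zero]
  · obtain ⟨y, hy⟩ : ι₂ z ∈ range f₁ := by
      rw [← hf.linearMap_ker_eq, mem_ker, hF₂', hz, map_zero]
    obtain ⟨w, rfl⟩ : y ∈ range ι₁ := by
      rw [← hι₁.linearMap_ker_eq, mem_ker]
      apply hg₁
      rw [← LinearMap.comp_apply, h₁, LinearMap.comp_apply, hy, hι₂.apply_apply_eq_zero, map_zero]
    exact ⟨w, hι₂_inj (by rw [← hF₁', hy])⟩

namespace DS

section

variable {M : Type*} [AddCommGroup M] [Module ℂ M] (x : M →ₗ[ℂ] M) (hx : x ∘ₗ x = 0)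

noncomputable def quotRangeToKer : (M ⧸ range x) →ₗ[ℂ] ker x :=
  (range x).liftQ (x.codRestrict (ker x) fun m => by simpa using congr($hx m)) <| by
    rintro _ ⟨m, rfl⟩
    ext
    simpa using congr($hx m)

noncomputable def toQuotRange : DS x →ₗ[ℂ] M ⧸ range x :=
  Submodule.mapQ _ _ (ker x).subtype le_rfl

@[simp]
theorem toQuotRange_mk (m : ker x) :
    toQuotRange x (Submodule.Quotient.mk m) = Submodule.Quotient.mk (m : M) :=
  rfl

theorem injective_toQuotRange : Injective (toQuotRange x) := by
  rw [← ker_eq_bot, eq_bot_iff]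
  intro z hz
  obtain ⟨m, rfl⟩ := Submodule.Quotient.mk_surjective _ z
  rw [mem_ker, toQuotRange_mk, Submodule.Quotient.mk_eq_zero] at hz
  exact (Submodule.Quotient.mk_eq_zero _).mpr hz

theorem exact_toQuotRange_quotRangeToKer : Exact (toQuotRange x) (quotRangeToKer x hx) := by
  intro z
  constructor
  · obtain ⟨m, rfl⟩ := Submodule.Quotient.mk_surjective _ z
    intro hm
    exact ⟨Submodule.Quotient.mk ⟨m, congr(($hm : M))⟩, rfl⟩
  · rintro ⟨w, rfl⟩
    obtain ⟨m, rfl⟩ := Submodule.Quotient.mk_surjective _ w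
    exact Subtype.ext m.2

theorem exact_quotRangeToKer_mkQ :
    Exact (quotRangeToKer x hx) ((range x).comap (ker x).subtype).mkQ := by
  rw [exact_iff, Submodule.ker_mkQ, quotRangeToKer, Submodule.range_liftQ, range_codRestrict]

end

section

variable {N M : Type*} [AddCommGroup N] [Module ℂ N] [AddCommGroup M] [Module ℂ M]
  {xN : N →ₗ[ℂ] N} {xM : M →ₗ[ℂ] M} (f : N →ₗ[ℂ] M) (hf : xM ∘ₗ f = f ∘ₗ xN)

noncomputable def quotRangeMap : (N ⧸ range xN) →ₗ[ℂ] M ⧸ range xM :=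
  Submodule.mapQ _ _ f <| by
    rintro _ ⟨n, rfl⟩
    exact ⟨f n, congr($hf n)⟩

noncomputable def kerMap : ker xN →ₗ[ℂ] ker xM :=
  f.restrict fun n hn => by
    rw [mem_ker, ← LinearMap.comp_apply, hf, LinearMap.comp_apply, mem_ker.mp hn, map_zero]

theorem kerMap_comp_quotRangeToKer (hxN : xN ∘ₗ xN = 0) (hxM : xM ∘ₗ xM = 0) :
    kerMap f hf ∘ₗ quotRangeToKer xN hxN = quotRangeToKer xM hxM ∘ₗ quotRangeMap f hf := by
  ext n
  exact congr($hf n).symm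

theorem quotRangeMap_comp_toQuotRange :
    quotRangeMap f hf ∘ₗ toQuotRange xN = toQuotRange xM ∘ₗ DSmap xN xM f hf := by
  ext
  rfl

theorem DSmap_comp_mkQ :
    DSmap xN xM f hf ∘ₗ ((range xN).comap (ker xN).subtype).mkQ =
      ((range xM).comap (ker xM).subtype).mkQ ∘ₗ kerMap f hf :=
  rfl

theorem injective_kerMap (hf_inj : Injective f) : Injective (kerMap f hf) :=
  fun _ _ h => Subtype.ext (hf_inj congr(($h : M)))

end

section

variable {N M K : Type*} [AddCommGroup N] [Module ℂ N] [AddCommGroup M] [Module ℂ M]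
  [AddCommGroup K] [Module ℂ K] {xN : N →ₗ[ℂ] N} {xM : M →ₗ[ℂ] M} {xK : K →ₗ[ℂ] K}
  {f : N →ₗ[ℂ] M} {g : M →ₗ[ℂ] K} (hf : xM ∘ₗ f = f ∘ₗ xN) (hg : xK ∘ₗ g = g ∘ₗ xM)

theorem surjective_quotRangeMap (hg_surj : Surjective g) : Surjective (quotRangeMap g hg) := by
  intro q
  obtain ⟨m, rfl⟩ := Submodule.Quotient.mk_surjective _ q
  obtain ⟨n, rfl⟩ := hg_surj m
  exact ⟨Submodule.Quotient.mk n, rfl⟩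

theorem exact_quotRangeMap (hfg : Exact f g) (hg_surj : Surjective g) :
    Exact (quotRangeMap f hf) (quotRangeMap g hg) := by
  refine (hfg.exact_mapQ_iff _ _).mpr ?_
  rintro _ ⟨-, k, rfl⟩
  obtain ⟨m, rfl⟩ := hg_surj k
  exact ⟨xM m, ⟨m, rfl⟩, congr($hg m).symm⟩

theorem exact_kerMap (hfg : Exact f g) (hf_inj : Injective f) :
    Exact (kerMap f hf) (kerMap g hg) := by
  refine exact_of_comp_of_mem_range ?_ fun ⟨m, hm⟩ h => ?_
  · ext n
    exact hfg.apply_apply_eq_zero (n : N)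
  · obtain ⟨n, rfl⟩ := (hfg m).mp congr(($h : K))
    refine ⟨⟨n, hf_inj ?_⟩, rfl⟩
    rw [← LinearMap.comp_apply, ← hf, LinearMap.comp_apply, mem_ker.mp hm, map_zero]

noncomputable def connecting (hxN : xN ∘ₗ xN = 0) (hxM : xM ∘ₗ xM = 0) (hxK : xK ∘ₗ xK = 0)
    (hfg : Exact f g) (hf_inj : Injective f) (hg_surj : Surjective g) : DS xK →ₗ[ℂ] DS xN :=
  SnakeLemma.δ' (quotRangeToKer xN hxN) (quotRangeToKer xM hxM) (quotRangeToKer xK hxK)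
    (quotRangeMap f hf) (quotRangeMap g hg) (exact_quotRangeMap hf hg hfg hg_surj)
    (kerMap f hf) (kerMap g hg) (exact_kerMap hf hg hfg hf_inj)
    (kerMap_comp_quotRangeToKer f hf hxN hxM) (kerMap_comp_quotRangeToKer g hg hxM hxK)
    (toQuotRange xK) (exact_toQuotRange_quotRangeToKer xK hxK)
    (Submodule.mkQ _) (exact_quotRangeToKer_mkQ xN hxN)
    (surjective_quotRangeMap hg hg_surj) (injective_kerMap f hf hf_inj)

theorem exact_DSmap_connecting (hxN : xN ∘ₗ xN = 0) (hxM : xM ∘ₗ xM = 0)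
    (hxK : xK ∘ₗ xK = 0) (hfg : Exact f g) (hf_inj : Injective f) (hg_surj : Surjective g) :
    Exact (DSmap xM xK g hg) (connecting hf hg hxN hxM hxK hfg hf_inj hg_surj) := by
  apply SnakeLemma.exact_δ'_right (hι₂ := exact_toQuotRange_quotRangeToKer xM hxM)
    (hF := quotRangeMap_comp_toQuotRange g hg) (h := injective_toQuotRange xK)

theorem exact_connecting_DSmap (hxN : xN ∘ₗ xN = 0) (hxM : xM ∘ₗ xM = 0)
    (hxK : xK ∘ₗ xK = 0) (hfg : Exact f g) (hf_inj : Injective f) (hg_surj : Surjective g) :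
    Exact (connecting hf hg hxN hxM hxK hfg hf_inj hg_surj) (DSmap xN xM f hf) := by
  apply SnakeLemma.exact_δ'_left (hπ₂ := exact_quotRangeToKer_mkQ xM hxM)
    (hF := DSmap_comp_mkQ f hf) (h := Submodule.mkQ_surjective _)

theorem exact_DSmap_DSmap (hxN : xN ∘ₗ xN = 0) (hxM : xM ∘ₗ xM = 0)
    (hfg : Exact f g) (hf_inj : Injective f) (hg_surj : Surjective g) :
    Exact (DSmap xN xM f hf) (DSmap xM xK g hg) :=
  SnakeLemma.exact_kernels (exact_quotRangeMap hf hg hfg hg_surj)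
    (injective_kerMap f hf hf_inj) (kerMap_comp_quotRangeToKer f hf hxN hxM)
    (exact_toQuotRange_quotRangeToKer xN hxN) (exact_toQuotRange_quotRangeToKer xM hxM)
    (injective_toQuotRange xM) (injective_toQuotRange xK)
    (quotRangeMap_comp_toQuotRange f hf) (quotRangeMap_comp_toQuotRange g hg)

end

end DS

theorem stmt8_general {N M K : Type*}
    [AddCommGroup N] [Module ℂ N]
    [AddCommGroup M] [Module ℂ M]
    [AddCommGroup K] [Module ℂ K]
    (xN : N →ₗ[ℂ] N) (xM : M →ₗ[ℂ] M) (xK : K →ₗ[ℂ] K)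
    (hxN : xN ∘ₗ xN = 0) (hxM : xM ∘ₗ xM = 0) (hxK : xK ∘ₗ xK = 0)
    (f : N →ₗ[ℂ] M) (g : M →ₗ[ℂ] K)
    (hfinj : Function.Injective f) (hgsurj : Function.Surjective g)
    (hexact : LinearMap.range f = LinearMap.ker g)
    (hcf : xM ∘ₗ f = f ∘ₗ xN) (hcg : xK ∘ₗ g = g ∘ₗ xM) :
    LinearMap.range xM ≤ LinearMap.ker xM ∧
    LinearMap.range (DSmap xN xM f hcf) = LinearMap.ker (DSmap xM xK g hcg) ∧
    Module.finrank ℂ (LinearMap.ker (DSmap xN xM f hcf)) =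
      Module.finrank ℂ (DS xK ⧸ LinearMap.range (DSmap xM xK g hcg)) := by
  have hfg : Exact f g := exact_iff.mpr hexact.symm
  have exact_g_δ := DS.exact_DSmap_connecting hcf hcg hxN hxM hxK hfg hfinj hgsurj
  have exact_δ_f := DS.exact_connecting_DSmap hcf hcg hxN hxM hxK hfg hfinj hgsurj
  refine ⟨range_le_ker_iff.mpr hxM,
    (DS.exact_DSmap_DSmap hcf hcg hxN hxM hfg hfinj hgsurj).linearMap_ker_eq.symm, ?_⟩
  rw [exact_δ_f.linearMap_ker_eq, ← exact_g_δ.linearMap_ker_eq]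
  exact (quotKerEquivRange _).finrank_eq.symm

/-- Hinich's lemma: if `x` is a square-zero (odd) operator then
`Im x ⊆ Ker x`, so `DS_x` is well-defined, and a short exact sequence
`0 → N → M → K → 0` compatible with the operators induces a six-term exact
sequence `0 → E → DS_x N → DS_x M → DS_x K → E′ → 0` with `dim E = dim E′`. -/
theorem stmt8 {N M K : Type*}
    [AddCommGroup N] [Module ℂ N] [FiniteDimensional ℂ N]
    [AddCommGroup M] [Module ℂ M] [FiniteDimensional ℂ M]
    [AddCommGroup K] [Module ℂ K] [FiniteDimensional ℂ K]
    (xN : N →ₗ[ℂ] N) (xM : M →ₗ[ℂ] M) (xK : K →ₗ[ℂ] K)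
    (hxN : xN ∘ₗ xN = 0) (hxM : xM ∘ₗ xM = 0) (hxK : xK ∘ₗ xK = 0)
    (f : N →ₗ[ℂ] M) (g : M →ₗ[ℂ] K)
    (hfinj : Function.Injective f) (hgsurj : Function.Surjective g)
    (hexact : LinearMap.range f = LinearMap.ker g)
    (hcf : xM ∘ₗ f = f ∘ₗ xN) (hcg : xK ∘ₗ g = g ∘ₗ xM) :
    LinearMap.range xM ≤ LinearMap.ker xM ∧
    LinearMap.range (DSmap xN xM f hcf) = LinearMap.ker (DSmap xM xK g hcg) ∧
    Module.finrank ℂ (LinearMap.ker (DSmap xN xM f hcf)) =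
      Module.finrank ℂ (DS xK ⧸ LinearMap.range (DSmap xM xK g hcg)) :=
  stmt8_general xN xM xK hxN hxM hxK f g hfinj hgsurj hexact hcf hcg
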